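/- Let P_L(l) be the m-uniform loose path of length l ≥ 1, with m ≥ 3. Then λ1(P_L(l)) < (m-1+√(m²+6m-7))/(2(m-1)). -/

import Mathlib

noncomputable section

open scoped Classical

/-- A finite hypergraph: a bundled finite vertex type together with a finite
set of edges, each edge being a finite set of vertices. -/
structure HG where
  V : Type
  fin : Fintype V
  dec : DecidableEq V
  E : Finset (Finset V)

attribute [instance] HG.fin HG.dec

namespace HG

/-- Adjacency matrix of an `m`-uniform hypergraph: entry `1/(m-1)` if the two
vertices are distinct and lie in a common edge, `0` otherwise. -/
def adjMatrix (m : ℕ) (H : HG) : Matrix H.V H.V ℝ := fun i j =>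
  if i ≠ j ∧ ∃ e ∈ H.E, i ∈ e ∧ j ∈ e then ((m : ℝ) - 1)⁻¹ else 0

/-- The spectral radius `λ₁(H)`: the largest (real) eigenvalue of the adjacency matrix. -/
def lam1 (m : ℕ) (H : HG) : ℝ :=
  sSup {t : ℝ | ∃ x : H.V → ℝ, x ≠ 0 ∧ (H.adjMatrix m).mulVec x = t • x}

/-- `H` is `m`-uniform: every edge has exactly `m` vertices. -/
def Uniform (H : HG) (m : ℕ) : Prop := ∀ e ∈ H.E, e.card = m

/-- `H` is linear: two distinct edges meet in at most one vertex. -/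
def Linear (H : HG) : Prop := ∀ e ∈ H.E, ∀ f ∈ H.E, e ≠ f → (e ∩ f).card ≤ 1

/-- The underlying (adjacency) simple graph of a hypergraph. -/
def toGraph (H : HG) : SimpleGraph H.V where
  Adj i j := i ≠ j ∧ ∃ e ∈ H.E, i ∈ e ∧ j ∈ e
  symm := ⟨by rintro i j ⟨hne, e, he, hi, hj⟩; exact ⟨hne.symm, e, he, hj, hi⟩⟩
  loopless := ⟨by rintro i ⟨hne, -⟩; exact hne rfl⟩

/-- Connectedness of a hypergraph. -/
def Connected (H : HG) : Prop := H.toGraph.Connected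

/-- Diameter: maximum distance between two vertices. -/
def diam (H : HG) : ℕ :=
  Finset.univ.sup fun u => Finset.univ.sup fun v => H.toGraph.dist u v

/-- Degree of a vertex: the number of edges containing it. -/
def degree (H : HG) (v : H.V) : ℕ := (H.E.filter fun e => v ∈ e).card

/-- A vertex is pendant if it lies in exactly one edge. -/
def PendantVertex (H : HG) (v : H.V) : Prop := H.degree v = 1

/-- An edge is pendant if it contains exactly one non-pendant vertex. -/
def PendantEdge (H : HG) (e : Finset H.V) : Prop :=
  e ∈ H.E ∧ (e.filter fun v => ¬ H.PendantVertex v).card = 1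

/-- A supertree: connected `m`-uniform linear hypergraph with `n - 1 = k (m-1)`. -/
def IsSupertree (m : ℕ) (H : HG) : Prop :=
  H.Uniform m ∧ H.Linear ∧ H.Connected ∧
    Fintype.card H.V = H.E.card * (m - 1) + 1

/-- A hypertree: a supertree each of whose edges has at most two non-pendant vertices. -/
def IsHypertree (m : ℕ) (H : HG) : Prop :=
  H.IsSupertree m ∧ ∀ e ∈ H.E, (e.filter fun v => ¬ H.PendantVertex v).card ≤ 2

/-- Isomorphism of hypergraphs. -/
def Iso (H K : HG) : Prop :=
  ∃ f : H.V ≃ K.V, ∀ e : Finset H.V, e ∈ H.E ↔ e.image f ∈ K.E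

/-- `X` is a Perron eigenvector of `H`: positive and an eigenvector for `λ₁`. -/
def IsPerron (m : ℕ) (H : HG) (X : H.V → ℝ) : Prop :=
  (∀ v, 0 < X v) ∧ (H.adjMatrix m).mulVec X = lam1 m H • X

/-- Cyclic successor on `Fin l`. -/
def cycNext (l : ℕ) (j : Fin l) : Fin l :=
  ⟨(j.val + 1) % l, Nat.mod_lt _ (lt_of_le_of_lt (Nat.zero_le _) j.isLt)⟩

/-- `e : Fin l → Finset H.V` is a loose cycle of length `l` in `H`:
consecutive edges meet in exactly one vertex, non-consecutive edges are disjoint. -/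
def IsLooseCycle (H : HG) (l : ℕ) (e : Fin l → Finset H.V) : Prop :=
  3 ≤ l ∧ (∀ i, e i ∈ H.E) ∧ Function.Injective e ∧
    ∀ i j : Fin l, i ≠ j →
      ((j = cycNext l i ∨ i = cycNext l j) → (e i ∩ e j).card = 1) ∧
      (¬(j = cycNext l i ∨ i = cycNext l j) → e i ∩ e j = ∅)

/-- The collection of (edge sets of) loose cycles contained in `H`. -/
def cycleSets (H : HG) : Set (Finset (Finset H.V)) :=
  {C | ∃ (l : ℕ) (e : Fin l → Finset H.V), H.IsLooseCycle l e ∧ C = Finset.univ.image e}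

/-- The `m`-th power hypergraph of the graph with vertex type `Vg` and edges
`{a i, b i}` for `i : Eg`: each edge is enlarged with `m - 2` new vertices. -/
def powerHG (m : ℕ) (Vg Eg : Type) [Fintype Vg] [DecidableEq Vg] [Fintype Eg] [DecidableEq Eg]
    (a b : Eg → Vg) : HG where
  V := Vg ⊕ Eg × Fin (m - 2)
  fin := inferInstance
  dec := inferInstance
  E := Finset.univ.image fun i : Eg =>
    ({Sum.inl (a i), Sum.inl (b i)} : Finset (Vg ⊕ Eg × Fin (m - 2))) ∪
      Finset.univ.image fun t : Fin (m - 2) => Sum.inr (i, t)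

/-- `H` is (isomorphic to) the `m`-th power hypergraph of some simple graph. -/
def IsPowerHG (m : ℕ) (H : HG) : Prop :=
  ∃ (N k : ℕ) (a b : Fin k → Fin N),
    (∀ i, a i ≠ b i) ∧
    (Function.Injective fun i => ({a i, b i} : Finset (Fin N))) ∧
    H.Iso (powerHG m (Fin N) (Fin k) a b)

/-- The `m`-uniform loose path of length `l`. -/
def loosePath (m l : ℕ) : HG :=
  powerHG m (Fin (l + 1)) (Fin l) (fun j => j.castSucc) (fun j => j.succ)

/-- The `m`-uniform hyperstar with `k` edges. -/
def hyperstar (m k : ℕ) : HG :=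
  powerHG m (Fin (k + 1)) (Fin k) (fun _ => 0) (fun i => i.succ)

/-- `T_d(c₂,…,c_d)`: the hypertree obtained from the loose path
`v₁ e₁ v₂ … v_d e_d v_{d+1}` by attaching `c i` pendant edges at `v_i`
(the path vertex of 0-based index `j` is `v_{j+1}`). -/
def Td (m d : ℕ) (c : ℕ → ℕ) : HG :=
  powerHG m
    (Fin (d + 1) ⊕ Σ j : Fin (d + 1), Fin (c (j.val + 1)))
    (Fin d ⊕ Σ j : Fin (d + 1), Fin (c (j.val + 1)))
    (Sum.elim (fun j => Sum.inl j.castSucc) fun x => Sum.inl x.1)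
    (Sum.elim (fun j => Sum.inl j.succ) fun x => Sum.inr x)

/-- `UC_l(c₁,…,c_l)`: the unicyclic hypergraph obtained from the loose cycle
`v₁ e₁ v₂ … v_l e_l v₁` by attaching `c i` pendant edges at `v_i`
(the cycle vertex of 0-based index `j` is `v_{j+1}`). -/
def UCl (m l : ℕ) (c : ℕ → ℕ) : HG :=
  powerHG m
    (Fin l ⊕ Σ j : Fin l, Fin (c (j.val + 1)))
    (Fin l ⊕ Σ j : Fin l, Fin (c (j.val + 1)))
    (Sum.elim (fun j => Sum.inl j) fun x => Sum.inl x.1)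
    (Sum.elim (fun j => Sum.inl (cycNext l j)) fun x => Sum.inr x)

/-- `U_lC(c₁ = a)`: obtained from `UC_l(c₁ = a)` by attaching one further pendant
edge at a pendant vertex of one of its `a` pendant edges. -/
def UlC (m l a : ℕ) : HG :=
  match l, a with
  | l' + 1, a' + 1 =>
    powerHG m (Fin (l' + 1) ⊕ Fin (a' + 1) ⊕ Unit) (Fin (l' + 1) ⊕ Fin (a' + 1) ⊕ Unit)
      (Sum.elim (fun j => Sum.inl j)
        (Sum.elim (fun _ => Sum.inl 0) fun _ => Sum.inr (Sum.inl 0)))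
      (Sum.elim (fun j => Sum.inl (cycNext (l' + 1) j))
        (Sum.elim (fun t => Sum.inr (Sum.inl t)) fun _ => Sum.inr (Sum.inr ())))
  | _, _ => ⟨PUnit, inferInstance, inferInstance, ∅⟩

/-- `BC(l₁)`: two loose 3-cycles glued at one common core vertex, with `l₁`
pendant edges attached at the identified core vertex. -/
def BC (m l1 : ℕ) : HG :=
  powerHG m (Unit ⊕ Fin 4 ⊕ Fin l1) (Fin 6 ⊕ Fin l1)
    (Sum.elim
      ![Sum.inl (), Sum.inr (Sum.inl 0), Sum.inr (Sum.inl 1),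
        Sum.inl (), Sum.inr (Sum.inl 2), Sum.inr (Sum.inl 3)]
      fun _ => Sum.inl ())
    (Sum.elim
      ![Sum.inr (Sum.inl 0), Sum.inr (Sum.inl 1), Sum.inl (),
        Sum.inr (Sum.inl 2), Sum.inr (Sum.inl 3), Sum.inl ()]
      fun t => Sum.inr (Sum.inr t))

/-- `B₂C(l₁,l₂)`: obtained from `BC(l₁)` by attaching `l₂` pendant edges at a
core vertex of degree 2 of one of its 3-cycles. -/
def B2C (m l1 l2 : ℕ) : HG :=
  powerHG m (Unit ⊕ Fin 4 ⊕ Fin l1 ⊕ Fin l2) (Fin 6 ⊕ Fin l1 ⊕ Fin l2)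
    (Sum.elim
      ![Sum.inl (), Sum.inr (Sum.inl 0), Sum.inr (Sum.inl 1),
        Sum.inl (), Sum.inr (Sum.inl 2), Sum.inr (Sum.inl 3)]
      (Sum.elim (fun _ => Sum.inl ()) fun _ => Sum.inr (Sum.inl 0)))
    (Sum.elim
      ![Sum.inr (Sum.inl 0), Sum.inr (Sum.inl 1), Sum.inl (),
        Sum.inr (Sum.inl 2), Sum.inr (Sum.inl 3), Sum.inl ()]
      (Sum.elim (fun t => Sum.inr (Sum.inr (Sum.inl t)))
        fun t => Sum.inr (Sum.inr (Sum.inr t))))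

/-- `T₁C(l₁,l₂,l₃,l₄)`: the tricyclic Type I hypergraph built on the theta graph
with cycles `v₁e₁v₂e₂v₃e₃v₁`, `v₁e₃v₃e₄v₄e₅v₁`, `v₁e₁v₂e₂v₃e₄v₄e₅v₁`
(here 0-based: `v₁ = 0, v₂ = 1, v₃ = 2, v₄ = 3`), together with `lᵢ` pendant
edges at `vᵢ`. -/
def T1C (m l1 l2 l3 l4 : ℕ) : HG :=
  powerHG m
    (Fin 4 ⊕ (Fin l1 ⊕ Fin l2 ⊕ Fin l3 ⊕ Fin l4))
    (Fin 5 ⊕ (Fin l1 ⊕ Fin l2 ⊕ Fin l3 ⊕ Fin l4))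
    (Sum.elim
      ![Sum.inl 0, Sum.inl 1, Sum.inl 2, Sum.inl 2, Sum.inl 3]
      (Sum.elim (fun _ => Sum.inl 0)
        (Sum.elim (fun _ => Sum.inl 1)
          (Sum.elim (fun _ => Sum.inl 2) fun _ => Sum.inl 3))))
    (Sum.elim
      ![Sum.inl 1, Sum.inl 2, Sum.inl 0, Sum.inl 3, Sum.inl 0]
      (Sum.elim (fun t => Sum.inr (Sum.inl t))
        (Sum.elim (fun t => Sum.inr (Sum.inr (Sum.inl t)))
          (Sum.elim (fun t => Sum.inr (Sum.inr (Sum.inr (Sum.inl t))))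
            fun t => Sum.inr (Sum.inr (Sum.inr (Sum.inr t)))))))

end HG

open Finset
open scoped Matrix

/-!
Write `D = m - 1` and let `Λ` be the positive root of `Λ² = DΛ + 2D`; the bound is `Λ / D`, the
spectral radius of a loose cycle, whose Perron vector is `Λ - D + 2` on core vertices and `2` on
the `m - 2` inner vertices of each edge. Restricted to the loose path, this vector `w` satisfies
`A w ≤ (Λ / D) w` entrywise: each edge has total weight `2Λ + 2` and core vertices lie in at
most two edges. At an end vertex, which lies in a single edge, the inequality is strict. For a
nonnegative matrix whose positive entries form a connected graph, such a `w` bounds every real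
eigenvalue strictly: at a vertex maximizing `|x| / w` for an eigenvector `x`, equality in the estimate forces
the maximum at every neighbour, so it would propagate to the end vertex.
-/

theorem Finset.card_filter_eq_le_one_of_injective {α β : Type*} [Fintype α] [DecidableEq β]
    {f : α → β} (hf : Function.Injective f) (b : β) : #{a | f a = b} ≤ 1 :=
  card_le_one.2 fun _ hx _ hy => hf ((mem_filter.1 hx).2.trans (mem_filter.1 hy).2.symm)

theorem Matrix.eigenvalue_lt_of_mulVec_le {n : Type*} [Fintype n] {M : Matrix n n ℝ}
    (hM : ∀ i j, 0 ≤ M i j) {G : SimpleGraph n} (hG : G.Connected)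
    (hGM : ∀ ⦃i j⦄, G.Adj i j → 0 < M i j) {w : n → ℝ} (hw : ∀ i, 0 < w i) {c : ℝ}
    (hc : ∀ i, (M *ᵥ w) i ≤ c * w i) {i₀ : n} (hi₀ : (M *ᵥ w) i₀ < c * w i₀)
    {t : ℝ} {x : n → ℝ} (hx : x ≠ 0) (hMx : M *ᵥ x = t • x) : t < c := by
  by_contra! hct
  obtain ⟨i, -, hi⟩ := exists_max_image univ (fun j => |x j| / w j) ⟨i₀, mem_univ _⟩
  set r := |x i| / w i
  have hxr : ∀ j, |x j| ≤ r * w j := fun j => (div_le_iff₀ (hw j)).1 (hi j (mem_univ j))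
  have hr : 0 < r := by
    obtain ⟨k, hk⟩ := Function.ne_iff.mp hx
    exact pos_of_mul_pos_left ((abs_pos.2 hk).trans_le (hxr k)) (hw k).le
  have squeeze : ∀ j, |x j| = r * w j →
      c * (r * w j) ≤ ∑ k, M j k * |x k| ∧ ∑ k, M j k * |x k| ≤ r * (M *ᵥ w) j := by
    intro j hj
    refine ⟨?_, ?_⟩
    · calc c * (r * w j) = c * |x j| := by rw [hj]
        _ ≤ t * |x j| := mul_le_mul_of_nonneg_right hct (abs_nonneg _)
        _ ≤ |t * x j| := by
          rw [abs_mul]; exact mul_le_mul_of_nonneg_right (le_abs_self t) (abs_nonneg _)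
        _ = |∑ k, M j k * x k| := by rw [← smul_eq_mul, ← Pi.smul_apply, ← hMx]; rfl
        _ ≤ ∑ k, |M j k * x k| := abs_sum_le_sum_abs _ _
        _ = ∑ k, M j k * |x k| := by simp only [abs_mul, abs_of_nonneg (hM _ _)]
    · rw [Matrix.mulVec, dotProduct, mul_sum]
      exact sum_le_sum fun k _ => by nlinarith [hxr k, hM j k]
  have spread : ∀ j k, |x j| = r * w j → G.Adj j k → |x k| = r * w k := by
    intro j k hj hjk
    obtain ⟨h₁, h₂⟩ := squeeze j hj
    have hzero : ∑ l, M j l * (r * w l - |x l|) = 0 := by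
      have : ∑ l, M j l * (r * w l - |x l|) = r * (M *ᵥ w) j - ∑ l, M j l * |x l| := by
        simp only [Matrix.mulVec, dotProduct, mul_sub, sum_sub_distrib, mul_sum]
        congr 1; exact sum_congr rfl fun l _ => by ring
      nlinarith [hc j]
    have := (sum_eq_zero_iff_of_nonneg fun l _ => mul_nonneg (hM j l)
      (sub_nonneg.2 (hxr l))).1 hzero k (mem_univ k)
    have := (mul_eq_zero.1 this).resolve_left (hGM hjk).ne'
    linarith
  have hi₀max : |x i₀| = r * w i₀ := by
    have hreach := (SimpleGraph.reachable_iff_reflTransGen i i₀).1 (hG.preconnected i i₀)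
    clear hi₀
    induction hreach with
    | refl => exact (div_eq_iff (hw i).ne').1 rfl
    | tail _ hadj ih => exact spread _ _ ih hadj
  obtain ⟨h₁, h₂⟩ := squeeze i₀ hi₀max
  nlinarith [mul_lt_mul_of_pos_left hi₀ hr]

namespace HG

section AdjMatrix

variable {m : ℕ} (H : HG)

theorem adjMatrix_nonneg (hm : 1 ≤ m) (i j : H.V) : 0 ≤ H.adjMatrix m i j := by
  have : (1 : ℝ) ≤ m := by exact_mod_cast hm
  unfold adjMatrix
  split_ifs
  exacts [inv_nonneg.2 (by linarith), le_rfl]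

theorem adjMatrix_pos (hm : 2 ≤ m) {i j : H.V} (h : H.toGraph.Adj i j) :
    0 < H.adjMatrix m i j := by
  have : (2 : ℝ) ≤ m := by exact_mod_cast hm
  have h' : i ≠ j ∧ ∃ e ∈ H.E, i ∈ e ∧ j ∈ e := h
  rw [adjMatrix, if_pos h']
  exact inv_pos.2 (by linarith)

theorem mulVec_adjMatrix_le (hm : 1 ≤ m) {w : H.V → ℝ} (hw : ∀ i, 0 ≤ w i) {S : ℝ}
    (hS : ∀ e ∈ H.E, ∑ j ∈ e, w j = S) (i : H.V) :
    (H.adjMatrix m *ᵥ w) i ≤ ((m : ℝ) - 1)⁻¹ * (H.degree i * (S - w i)) := by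
  have hm' : 0 ≤ ((m : ℝ) - 1)⁻¹ := by
    have : (1 : ℝ) ≤ m := by exact_mod_cast hm
    exact inv_nonneg.2 (by linarith)
  have hterm : ∀ j, H.adjMatrix m i j * w j ≤
      ((m : ℝ) - 1)⁻¹ * ∑ e ∈ H.E.filter (i ∈ ·), if j ∈ e.erase i then w j else 0 := by
    intro j
    unfold adjMatrix
    split_ifs with h
    · obtain ⟨hij, e, he, hie, hje⟩ := h
      refine mul_le_mul_of_nonneg_left ?_ hm'
      calc w j = if j ∈ e.erase i then w j else 0 := by
            rw [if_pos (mem_erase.2 ⟨Ne.symm hij, hje⟩)]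
        _ ≤ _ := single_le_sum (f := fun e => if j ∈ e.erase i then w j else 0)
            (fun _ _ => by split_ifs <;> simp [hw]) (mem_filter.2 ⟨he, hie⟩)
    · rw [zero_mul]
      exact mul_nonneg hm' (sum_nonneg fun _ _ => by split_ifs <;> simp [hw])
  calc (H.adjMatrix m *ᵥ w) i ≤ ∑ j, ((m : ℝ) - 1)⁻¹ *
        ∑ e ∈ H.E.filter (i ∈ ·), if j ∈ e.erase i then w j else 0 := sum_le_sum fun j _ => hterm j
    _ = ((m : ℝ) - 1)⁻¹ * ∑ e ∈ H.E.filter (i ∈ ·), ∑ j ∈ e.erase i, w j := by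
        rw [← mul_sum, sum_comm]
        simp only [sum_ite_mem, univ_inter]
    _ = ((m : ℝ) - 1)⁻¹ * (H.degree i * (S - w i)) := by
        rw [sum_congr rfl fun e he => by
          rw [sum_erase_eq_sub (mem_filter.1 he).2, hS e (mem_filter.1 he).1], sum_const,
          nsmul_eq_mul, degree]

theorem lam1_lt_of_mulVec_le (hm : 2 ≤ m) (hH : H.Connected) {w : H.V → ℝ}
    (hw : ∀ i, 0 < w i) {c : ℝ} (hc : ∀ i, (H.adjMatrix m *ᵥ w) i ≤ c * w i) {i₀ : H.V}
    (hi₀ : (H.adjMatrix m *ᵥ w) i₀ < c * w i₀) : lam1 m H < c := by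
  rw [lam1]
  set T := {t : ℝ | ∃ x : H.V → ℝ, x ≠ 0 ∧ H.adjMatrix m *ᵥ x = t • x}
  rcases T.eq_empty_or_nonempty with hT | hT
  · rw [hT, Real.sSup_empty]
    have := sum_nonneg fun j (_ : j ∈ univ) =>
      mul_nonneg (H.adjMatrix_nonneg (m := m) (by omega) i₀ j) (hw j).le
    exact pos_of_mul_pos_left (this.trans_lt hi₀) (hw i₀).le
  have hfin : T.Finite := (Module.End.finite_hasEigenvalue (Matrix.toLin' (H.adjMatrix m))).subset
    fun t ⟨x, hx, hMx⟩ => Module.End.hasEigenvalue_of_hasEigenvector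
      ⟨Module.End.mem_eigenspace_iff.2 (by rw [Matrix.toLin'_apply, hMx]), hx⟩
  exact (hfin.csSup_lt_iff hT).2 fun t ⟨x, hx, hMx⟩ =>
    Matrix.eigenvalue_lt_of_mulVec_le (H.adjMatrix_nonneg (by omega)) hH
      (fun _ _ => H.adjMatrix_pos hm) hw hc hi₀ hx hMx

end AdjMatrix

section PowerHG

variable {m : ℕ} {Vg Eg : Type} [DecidableEq Vg] [DecidableEq Eg] {a b : Eg → Vg}

variable (m a b) in
def powerEdge (i : Eg) : Finset (Vg ⊕ Eg × Fin (m - 2)) :=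
  {Sum.inl (a i), Sum.inl (b i)} ∪ univ.image fun t => Sum.inr (i, t)

theorem mem_powerEdge {i : Eg} {v : Vg ⊕ Eg × Fin (m - 2)} :
    v ∈ powerEdge m a b i ↔ v = Sum.inl (a i) ∨ v = Sum.inl (b i) ∨ ∃ t, v = Sum.inr (i, t) := by
  simp only [powerEdge, mem_union, mem_insert, mem_singleton, mem_image, mem_univ, true_and,
    or_assoc, eq_comm (b := v)]

theorem sum_powerEdge {i : Eg} (h : a i ≠ b i) (f : Vg → ℝ) (g : Eg × Fin (m - 2) → ℝ) :
    ∑ v ∈ powerEdge m a b i, Sum.elim f g v = f (a i) + f (b i) + ∑ t, g (i, t) := by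
  rw [powerEdge, sum_union, sum_pair (Sum.inl_injective.ne h),
    sum_image fun _ _ _ _ h => by simpa using h]
  · rfl
  · simp [disjoint_left]

variable [Fintype Vg] [Fintype Eg]

theorem powerHG_adj_inl_inl {i : Eg} (h : a i ≠ b i) :
    (powerHG m Vg Eg a b).toGraph.Adj (Sum.inl (a i)) (Sum.inl (b i)) :=
  ⟨Sum.inl_injective.ne h, _, mem_image_of_mem _ (mem_univ i), mem_powerEdge.2 (Or.inl rfl),
    mem_powerEdge.2 (Or.inr (Or.inl rfl))⟩

theorem powerHG_adj_inr_inl (i : Eg) (t : Fin (m - 2)) :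
    (powerHG m Vg Eg a b).toGraph.Adj (Sum.inr (i, t)) (Sum.inl (a i)) :=
  ⟨Sum.inr_ne_inl, _, mem_image_of_mem _ (mem_univ i),
    mem_powerEdge.2 (Or.inr (Or.inr ⟨t, rfl⟩)), mem_powerEdge.2 (Or.inl rfl)⟩

theorem degree_powerHG_le (v : Vg ⊕ Eg × Fin (m - 2)) :
    (powerHG m Vg Eg a b).degree v ≤ #{i | v ∈ powerEdge m a b i} := by
  change #((univ.image (powerEdge m a b)).filter (v ∈ ·)) ≤ _
  rw [filter_image]
  exact card_image_le

theorem degree_powerHG_inl_le (v : Vg) :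
    (powerHG m Vg Eg a b).degree (Sum.inl v) ≤ #{i | a i = v} + #{i | b i = v} := by
  refine (degree_powerHG_le _).trans ((card_le_card fun i hi => ?_).trans (card_union_le _ _))
  simp only [mem_filter, mem_univ, true_and, mem_union, mem_powerEdge, Sum.inl.injEq,
    reduceCtorEq, exists_false, or_false] at hi ⊢
  exact hi.imp Eq.symm Eq.symm

theorem degree_powerHG_inr_le (i : Eg) (t : Fin (m - 2)) :
    (powerHG m Vg Eg a b).degree (Sum.inr (i, t)) ≤ 1 := by
  refine (degree_powerHG_le _).trans (card_le_one.2 fun j hj k hk => ?_)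
  simp only [mem_filter, mem_univ, true_and, mem_powerEdge, reduceCtorEq, false_or,
    Sum.inr.injEq, Prod.mk.injEq] at hj hk
  obtain ⟨_, rfl, -⟩ := hj
  obtain ⟨_, rfl, -⟩ := hk
  rfl

end PowerHG

section LoosePath

variable {m l : ℕ}

theorem loosePath_connected : (loosePath m l).Connected := by
  have core : ∀ j : Fin (l + 1), (loosePath m l).toGraph.Reachable (Sum.inl 0) (Sum.inl j) := by
    intro j
    induction j using Fin.induction with
    | zero => rfl
    | succ k ih =>
      exact ih.trans (powerHG_adj_inl_inl (a := Fin.castSucc) (b := Fin.succ)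
        Fin.castSucc_lt_succ.ne).reachable
  refine (SimpleGraph.connected_iff_exists_forall_reachable _).2 ⟨Sum.inl 0, ?_⟩
  rintro (j | ⟨k, t⟩)
  · exact core j
  · exact (core k.castSucc).trans (powerHG_adj_inr_inl k t).symm.reachable

theorem loosePath_degree_inl_le (v : Fin (l + 1)) : (loosePath m l).degree (Sum.inl v) ≤ 2 :=
  (degree_powerHG_inl_le v).trans <| add_le_add
    (card_filter_eq_le_one_of_injective (Fin.castSucc_injective _) v)
    (card_filter_eq_le_one_of_injective (Fin.succ_injective _) v)

theorem loosePath_degree_inl_zero_le : (loosePath m l).degree (Sum.inl 0) ≤ 1 := by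
  refine (degree_powerHG_inl_le 0).trans ?_
  rw [filter_eq_empty_iff.2 fun i _ => Fin.succ_ne_zero i, card_empty, add_zero]
  exact card_filter_eq_le_one_of_injective (Fin.castSucc_injective _) 0

def loosePathWeight (m l : ℕ) (Λ : ℝ) : (loosePath m l).V → ℝ :=
  Sum.elim (fun _ => Λ - ((m : ℝ) - 1) + 2) fun _ => 2

variable {Λ : ℝ}

theorem loosePathWeight_pos (hDΛ : (m : ℝ) - 1 < Λ) (v : (loosePath m l).V) :
    0 < loosePathWeight m l Λ v := by
  rcases v with _ | _
  · exact show 0 < Λ - ((m : ℝ) - 1) + 2 by linarith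
  · exact two_pos

theorem sum_loosePathWeight (hm : 2 ≤ m) {e : Finset (loosePath m l).V}
    (he : e ∈ (loosePath m l).E) :
    ∑ v ∈ e, loosePathWeight m l Λ v = 2 * Λ + 2 := by
  obtain ⟨i, -, rfl⟩ :=
    mem_image.1 (show e ∈ univ.image (powerEdge m Fin.castSucc Fin.succ) from he)
  change ∑ v ∈ powerEdge m Fin.castSucc Fin.succ i,
    Sum.elim (fun _ => Λ - ((m : ℝ) - 1) + 2) (fun _ => 2) v = _
  rw [sum_powerEdge Fin.castSucc_lt_succ.ne, sum_const, card_univ, Fintype.card_fin,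
    nsmul_eq_mul, Nat.cast_sub hm]
  push_cast
  ring

theorem mulVec_loosePathWeight_le_degree (hm : 2 ≤ m) (hDΛ : (m : ℝ) - 1 < Λ)
    (v : (loosePath m l).V) :
    ((loosePath m l).adjMatrix m *ᵥ loosePathWeight m l Λ) v ≤
      ((m : ℝ) - 1)⁻¹ * ((loosePath m l).degree v * (2 * Λ + 2 - loosePathWeight m l Λ v)) :=
  mulVec_adjMatrix_le _ (by omega) (fun v => (loosePathWeight_pos hDΛ v).le)
    (fun _ => sum_loosePathWeight hm) v

theorem mulVec_loosePathWeight_le (hm : 2 ≤ m)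
    (hΛ : Λ ^ 2 = ((m : ℝ) - 1) * Λ + 2 * ((m : ℝ) - 1)) (hDΛ : (m : ℝ) - 1 < Λ)
    (v : (loosePath m l).V) :
    ((loosePath m l).adjMatrix m *ᵥ loosePathWeight m l Λ) v ≤
      Λ / ((m : ℝ) - 1) * loosePathWeight m l Λ v := by
  have hD : (0 : ℝ) < (m : ℝ) - 1 := by
    have : (2 : ℝ) ≤ m := by exact_mod_cast hm
    linarith
  refine (mulVec_loosePathWeight_le_degree hm hDΛ v).trans ?_
  rcases v with j | ⟨k, t⟩
  · change _ * (_ * (_ - (Λ - ((m : ℝ) - 1) + 2))) ≤ _ * (Λ - ((m : ℝ) - 1) + 2)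
    calc _ ≤ ((m : ℝ) - 1)⁻¹ * (2 * (Λ + ((m : ℝ) - 1))) := by
          rw [show 2 * Λ + 2 - (Λ - ((m : ℝ) - 1) + 2) = Λ + ((m : ℝ) - 1) by ring]
          gcongr
          · linarith
          · exact_mod_cast loosePath_degree_inl_le j
      _ = _ := by field_simp; linear_combination -hΛ
  · change _ * (_ * (_ - 2)) ≤ _ * 2
    calc _ ≤ ((m : ℝ) - 1)⁻¹ * (1 * (2 * Λ + 2 - 2)) := by
          gcongr
          · linarith
          · exact_mod_cast degree_powerHG_inr_le k t
      _ = _ := by field_simp; ring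

theorem mulVec_loosePathWeight_inl_zero_lt (hm : 2 ≤ m)
    (hΛ : Λ ^ 2 = ((m : ℝ) - 1) * Λ + 2 * ((m : ℝ) - 1)) (hDΛ : (m : ℝ) - 1 < Λ) :
    ((loosePath m l).adjMatrix m *ᵥ loosePathWeight m l Λ) (Sum.inl 0) <
      Λ / ((m : ℝ) - 1) * loosePathWeight m l Λ (Sum.inl 0) := by
  have hD : (0 : ℝ) < (m : ℝ) - 1 := by
    have : (2 : ℝ) ≤ m := by exact_mod_cast hm
    linarith
  refine (mulVec_loosePathWeight_le_degree hm hDΛ _).trans_lt ?_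
  change _ * (_ * (_ - (Λ - ((m : ℝ) - 1) + 2))) < _ * (Λ - ((m : ℝ) - 1) + 2)
  calc _ ≤ ((m : ℝ) - 1)⁻¹ * (1 * (Λ + ((m : ℝ) - 1))) := by
        rw [show 2 * Λ + 2 - (Λ - ((m : ℝ) - 1) + 2) = Λ + ((m : ℝ) - 1) by ring]
        gcongr
        · linarith
        · exact_mod_cast loosePath_degree_inl_zero_le
    _ < ((m : ℝ) - 1)⁻¹ * (2 * (Λ + ((m : ℝ) - 1))) := by
        gcongr
        · linarith
        · norm_num
    _ = _ := by field_simp; linear_combination -hΛ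

end LoosePath

end HG

open HG in
theorem loosePath_spectral_radius_lt_general
    (m l : ℕ) (hm : 3 ≤ m) :
    lam1 m (loosePath m l) <
      ((m : ℝ) - 1 + Real.sqrt ((m : ℝ) ^ 2 + 6 * (m : ℝ) - 7)) /
        (2 * ((m : ℝ) - 1)) := by
  set D : ℝ := (m : ℝ) - 1
  have hD2 : 2 ≤ D := by
    have : (3 : ℝ) ≤ m := by exact_mod_cast hm
    linarith
  set Λ := (D + √(D ^ 2 + 8 * D)) / 2 with hΛdef
  have hsqrt : √(D ^ 2 + 8 * D) ^ 2 = D ^ 2 + 8 * D := Real.sq_sqrt (by positivity)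
  have hDΛ : D < Λ := by
    have : D < √(D ^ 2 + 8 * D) := (Real.lt_sqrt (by linarith)).2 (by linarith)
    linarith
  have hΛ : Λ ^ 2 = D * Λ + 2 * D := by rw [hΛdef]; linear_combination hsqrt / 4
  have hRHS : (m : ℝ) - 1 + √((m : ℝ) ^ 2 + 6 * m - 7) = 2 * Λ := by
    rw [show (m : ℝ) ^ 2 + 6 * m - 7 = D ^ 2 + 8 * D by ring]; ring
  rw [hRHS, mul_div_mul_left _ _ two_ne_zero]
  exact lam1_lt_of_mulVec_le _ (by omega) loosePath_connected (loosePathWeight_pos hDΛ)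
    (mulVec_loosePathWeight_le (by omega) hΛ hDΛ)
    (mulVec_loosePathWeight_inl_zero_lt (by omega) hΛ hDΛ)

open HG in
/-- The spectral radius of the `m`-uniform loose path of length `l ≥ 1`
(`m ≥ 3`) is strictly smaller than `(m - 1 + √(m² + 6m - 7)) / (2(m-1))`
(the spectral radius of a loose cycle). -/
theorem loosePath_spectral_radius_lt
    (m l : ℕ) (hm : 3 ≤ m) (hl : 1 ≤ l) :
    lam1 m (loosePath m l) <
      ((m : ℝ) - 1 + Real.sqrt ((m : ℝ) ^ 2 + 6 * (m : ℝ) - 7)) /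
        (2 * ((m : ℝ) - 1)) :=
  loosePath_spectral_radius_lt_general m l hm
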